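/- arXiv:0812.4557 — 3 statements merged into one kernel-verified Lean document; each statement's English description precedes it below -/
import Mathlib

section
/- Let f : [0,1] → ℂ be continuous and b ≥ 2. For 0 < δ < 1, the modulus of continuity ω(f,δ) = sup{|f(t)-f(s)| : s,t ∈ [0,1], |t-s| ≤ δ} satisfies ω(f,δ) ≤ 2b ∑_{n ≥ -log δ / log b} max_{w ∈ {0,...,b-1}^n} Osc_f(I_w), where I_w is the closed b-adic interval of generation n = |w| encoded by w and Osc_f(I) = sup_{s,t∈I}|f(t)-f(s)|. -/
open MeasureTheory Filter Finset
open scoped Classical ENNReal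

/-- Left endpoint `t_w = ∑ w_i b^{-i}` of the `b`-adic interval encoded by the word
`w ∈ {0,…,b-1}^n`. -/
noncomputable def badicLeft (b n : ℕ) (w : Fin n → Fin b) : ℝ :=
  ∑ i : Fin n, ((w i : ℕ) : ℝ) * ((b : ℝ) ^ ((i : ℕ) + 1))⁻¹

/-- Oscillation (in `ℝ≥0∞`, via `edist`) of a function over a set. -/
noncomputable def eoscOn (f : ℝ → ℂ) (s : Set ℝ) : ℝ≥0∞ :=
  ⨆ x ∈ s, ⨆ y ∈ s, edist (f x) (f y)

/-!
Let `N = ⌈-log δ / log b⌉`, so that `δ ≤ b · b⁻ᴺ`. The `b`-adic intervals of generation `N` are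
exactly the grid cells `[k b⁻ᴺ, (k+1) b⁻ᴺ]`, so on each of them `f` oscillates by at most
`M_N = max_w Osc_f(I_w)`. Two points at distance `≤ b⁻ᴺ` lie in one cell or in two adjacent
ones, hence `|f s - f t| ≤ 2 M_N`; cutting a segment of length `≤ δ` into `b` equal pieces gives
`ω(f, δ) ≤ 2b M_N`, and `M_N` is one of the terms of the series.
-/

open Set

section UniformGrid

variable {E : Type*} [PseudoEMetricSpace E]

lemma exists_lt_mem_Icc_nat_mul {h x : ℝ} {K : ℕ} (hh : 0 < h) (hK : 0 < K)
    (hx : x ∈ Icc 0 (K * h)) : ∃ k < K, x ∈ Icc (k * h) ((k + 1) * h) := by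
  have hxh : 0 ≤ x / h := div_nonneg hx.1 hh.le
  rcases hx.2.lt_or_eq with hlt | rfl
  · exact ⟨⌊x / h⌋₊, (Nat.floor_lt hxh).2 ((div_lt_iff₀ hh).2 hlt),
      (le_div_iff₀ hh).1 (Nat.floor_le hxh), (div_le_iff₀ hh).1 (Nat.lt_floor_add_one _).le⟩
  · refine ⟨K - 1, by omega, ?_, ?_⟩ <;> rw [Nat.cast_pred hK] <;> nlinarith

/-- Points at distance at most `h` lie in one grid cell or in two adjacent ones. -/
lemma edist_le_two_mul_of_abs_sub_le_of_cells {F : ℝ → E} {h : ℝ} {K : ℕ} {M : ℝ≥0∞}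
    (hh : 0 < h) (hK : 0 < K)
    (hcell : ∀ k < K, ∀ x ∈ Icc (k * h) ((k + 1) * h), ∀ y ∈ Icc (k * h) ((k + 1) * h),
      edist (F x) (F y) ≤ M)
    {s t : ℝ} (hs : s ∈ Icc 0 (K * h)) (ht : t ∈ Icc 0 (K * h)) (hst : |t - s| ≤ h) :
    edist (F s) (F t) ≤ 2 * M := by
  wlog hle : s ≤ t generalizing s t
  · rw [edist_comm]
    exact this ht hs (by rwa [abs_sub_comm]) (le_of_not_ge hle)
  have hts : t ≤ s + h := by linarith [le_abs_self (t - s)]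
  obtain ⟨k, hk, hsk⟩ := exists_lt_mem_Icc_nat_mul hh hK hs
  by_cases htk : t ≤ (k + 1) * h
  · calc edist (F s) (F t) ≤ M := hcell k hk s hsk t ⟨hsk.1.trans hle, htk⟩
      _ ≤ 2 * M := le_mul_of_one_le_left zero_le one_le_two
  · rw [not_le] at htk
    have hk1 : k + 1 < K := by
      have : ((k + 1 : ℕ) : ℝ) * h < K * h := by push_cast; linarith [ht.2]
      exact_mod_cast lt_of_mul_lt_mul_right this hh.le
    have hnext := hcell (k + 1) hk1
    push_cast at hnext
    calc edist (F s) (F t) ≤ edist (F s) (F ((k + 1) * h)) + edist (F ((k + 1) * h)) (F t) :=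
          edist_triangle _ _ _
      _ ≤ M + M := by
          gcongr
          · exact hcell k hk s hsk _ ⟨by nlinarith, le_rfl⟩
          · exact hnext _ ⟨le_rfl, by nlinarith⟩ t ⟨htk.le, by linarith [hsk.2]⟩
      _ = 2 * M := (two_mul M).symm

/-- Chaining through the points dividing `[s, t]` into `m` equal parts. -/
lemma edist_le_nat_mul_of_abs_sub_le {F : ℝ → E} {I : Set ℝ} (hI : Convex ℝ I) {h : ℝ}
    {C : ℝ≥0∞} (hC : ∀ s ∈ I, ∀ t ∈ I, |t - s| ≤ h → edist (F s) (F t) ≤ C) (m : ℕ) :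
    ∀ s ∈ I, ∀ t ∈ I, |t - s| ≤ m * h → edist (F s) (F t) ≤ m * C := by
  induction m with
  | zero =>
    intro s _ t _ hst
    rw [Nat.cast_zero, zero_mul, abs_nonpos_iff, sub_eq_zero] at hst
    simp [hst]
  | succ m ih =>
    intro s hs t ht hst
    have hm : (0 : ℝ) < m + 1 := by positivity
    set u := s + (m + 1 : ℝ)⁻¹ • (t - s)
    have hu : u ∈ I :=
      hI.add_smul_sub_mem hs ht ⟨by positivity, inv_le_one_of_one_le₀ (by linarith)⟩
    have hus : |u - s| = |t - s| / (m + 1) := by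
      simp only [u, smul_eq_mul, add_sub_cancel_left, abs_mul, abs_inv, abs_of_pos hm]
      ring
    have htu : |t - u| = m * (|t - s| / (m + 1)) := by
      have : t - u = (m / (m + 1)) * (t - s) := by simp only [u, smul_eq_mul]; field_simp; ring
      rw [this, abs_mul, abs_of_nonneg (by positivity)]
      ring
    have hstep : |t - s| / (m + 1) ≤ h := by
      rw [div_le_iff₀ hm]; push_cast at hst; linarith
    calc edist (F s) (F t) ≤ edist (F s) (F u) + edist (F u) (F t) := edist_triangle _ _ _
      _ ≤ C + m * C := by
          gcongr
          · exact hC s hs u hu (hus ▸ hstep)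
          · exact ih u hu t ht (htu ▸ mul_le_mul_of_nonneg_left hstep m.cast_nonneg)
      _ = ((m + 1 : ℕ) : ℝ≥0∞) * C := by push_cast; ring

end UniformGrid

section BadicIntervals

lemma badicLeft_snoc (b n : ℕ) (w : Fin n → Fin b) (d : Fin b) :
    badicLeft b (n + 1) (Fin.snoc w d) = badicLeft b n w + (d : ℕ) * ((b : ℝ) ^ (n + 1))⁻¹ := by
  simp [badicLeft, Fin.sum_univ_castSucc]

lemma exists_badicLeft_eq {b : ℕ} (hb : 0 < b) (n : ℕ) {k : ℕ} (hk : k < b ^ n) :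
    ∃ w : Fin n → Fin b, badicLeft b n w = k * ((b : ℝ) ^ n)⁻¹ := by
  induction n generalizing k with
  | zero =>
    obtain rfl : k = 0 := by simpa using hk
    exact ⟨Fin.elim0, by simp [badicLeft]⟩
  | succ n ih =>
    obtain ⟨w, hw⟩ := ih (Nat.div_lt_of_lt_mul (by rwa [mul_comm, ← pow_succ]) : k / b < b ^ n)
    refine ⟨Fin.snoc w ⟨k % b, Nat.mod_lt _ hb⟩, ?_⟩
    have hdiv : (b : ℝ) * (k / b : ℕ) + (k % b : ℕ) = k := by exact_mod_cast Nat.div_add_mod k b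
    have hbR : (b : ℝ) ≠ 0 := by positivity
    rw [badicLeft_snoc, hw, ← hdiv]
    field_simp
    ring

noncomputable def maxBadicOsc (f : ℝ → ℂ) (b n : ℕ) : ℝ≥0∞ :=
  ⨆ w : Fin n → Fin b, eoscOn f (Icc (badicLeft b n w) (badicLeft b n w + ((b : ℝ) ^ n)⁻¹))

lemma edist_le_maxBadicOsc (f : ℝ → ℂ) {b : ℕ} (hb : 0 < b) (n : ℕ) {k : ℕ} (hk : k < b ^ n)
    {x y : ℝ} (hx : x ∈ Icc (k * ((b : ℝ) ^ n)⁻¹) ((k + 1) * ((b : ℝ) ^ n)⁻¹))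
    (hy : y ∈ Icc (k * ((b : ℝ) ^ n)⁻¹) ((k + 1) * ((b : ℝ) ^ n)⁻¹)) :
    edist (f x) (f y) ≤ maxBadicOsc f b n := by
  obtain ⟨w, hw⟩ := exists_badicLeft_eq hb n hk
  have hI : Icc (k * ((b : ℝ) ^ n)⁻¹) ((k + 1) * ((b : ℝ) ^ n)⁻¹)
      = Icc (badicLeft b n w) (badicLeft b n w + ((b : ℝ) ^ n)⁻¹) := by
    rw [hw, add_mul, one_mul]
  rw [hI] at hx hy
  exact le_iSup_of_le w (le_iSup₂_of_le x hx (le_iSup₂_of_le y hy le_rfl))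

end BadicIntervals

lemma le_mul_inv_pow_ceil_neg_log_div_log {b δ : ℝ} (hb : 1 < b) (hδ0 : 0 < δ) (hδ1 : δ ≤ 1) :
    δ ≤ b * (b ^ ⌈-Real.log δ / Real.log b⌉₊)⁻¹ := by
  set v := -Real.log δ / Real.log b
  have hlogb : 0 < Real.log b := Real.log_pos hb
  have hv : 0 ≤ v := div_nonneg (neg_nonneg.2 (Real.log_nonpos hδ0.le hδ1)) hlogb.le
  have hδ : δ = b ^ (-v) := by
    rw [Real.rpow_def_of_pos (by linarith), mul_neg, mul_div_cancel₀ _ hlogb.ne', neg_neg,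
      Real.exp_log hδ0]
  calc δ = b ^ (-v) := hδ
    _ ≤ b ^ (1 - (⌈v⌉₊ : ℝ)) :=
        Real.rpow_le_rpow_of_exponent_le hb.le (by linarith [Nat.ceil_lt_add_one hv])
    _ = b * (b ^ ⌈v⌉₊)⁻¹ := by
        rw [Real.rpow_sub (by linarith), Real.rpow_one, Real.rpow_natCast, div_eq_mul_inv]

theorem stmt5_general (b : ℕ) (hb : 2 ≤ b) (f : ℝ → ℂ)
    (δ : ℝ) (hδ0 : 0 < δ) (hδ1 : δ < 1) :
    (⨆ (s : ℝ) (_ : s ∈ Set.Icc (0:ℝ) 1) (t : ℝ) (_ : t ∈ Set.Icc (0:ℝ) 1)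
        (_ : |t - s| ≤ δ), edist (f s) (f t))
      ≤ (2 * b : ℝ≥0∞) *
        ∑' n : ℕ,
          if - Real.log δ / Real.log b ≤ (n : ℝ) then
            ⨆ w : Fin n → Fin b,
              eoscOn f (Set.Icc (badicLeft b n w) (badicLeft b n w + ((b : ℝ) ^ n)⁻¹))
          else 0 := by
  set N := ⌈-Real.log δ / Real.log b⌉₊
  have hb0 : 0 < b := by omega
  have hb1 : (1 : ℝ) < b := by exact_mod_cast hb
  have hgrid : ((b ^ N : ℕ) : ℝ) * ((b : ℝ) ^ N)⁻¹ = 1 := by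
    push_cast; exact mul_inv_cancel₀ (by positivity)
  have hnear : ∀ s ∈ Icc (0 : ℝ) 1, ∀ t ∈ Icc (0 : ℝ) 1, |t - s| ≤ ((b : ℝ) ^ N)⁻¹ →
      edist (f s) (f t) ≤ 2 * maxBadicOsc f b N := by
    rw [← hgrid]
    exact fun s hs t ht ↦ edist_le_two_mul_of_abs_sub_le_of_cells (by positivity) (pow_pos hb0 N)
      (fun k hk x hx y hy ↦ edist_le_maxBadicOsc f hb0 N hk hx hy) hs ht
  have hfar := edist_le_nat_mul_of_abs_sub_le (convex_Icc 0 1) hnear b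
  have hδ := le_mul_inv_pow_ceil_neg_log_div_log hb1 hδ0 hδ1.le
  calc _ ≤ (b : ℝ≥0∞) * (2 * maxBadicOsc f b N) :=
        iSup₂_le fun s hs ↦ iSup₂_le fun t ht ↦ iSup_le fun hst ↦
          hfar s hs t ht (hst.trans hδ)
    _ = 2 * b * maxBadicOsc f b N := by ring
    _ ≤ _ := by
        gcongr
        refine le_trans ?_ (ENNReal.le_tsum N)
        rw [if_pos (Nat.le_ceil _)]
        rfl

/-- for a continuous `f : [0,1] → ℂ` and `0 < δ < 1`, the modulus of continuity
satisfies `ω(f,δ) ≤ 2b ∑_{n ≥ -log δ / log b} max_{w ∈ {0,…,b-1}^n} Osc_f(I_w)`. -/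
theorem stmt5 (b : ℕ) (hb : 2 ≤ b) (f : ℝ → ℂ)
    (hf : ContinuousOn f (Set.Icc 0 1))
    (δ : ℝ) (hδ0 : 0 < δ) (hδ1 : δ < 1) :
    (⨆ (s : ℝ) (_ : s ∈ Set.Icc (0:ℝ) 1) (t : ℝ) (_ : t ∈ Set.Icc (0:ℝ) 1)
        (_ : |t - s| ≤ δ), edist (f s) (f t))
      ≤ (2 * b : ℝ≥0∞) *
        ∑' n : ℕ,
          if - Real.log δ / Real.log b ≤ (n : ℝ) then
            ⨆ w : Fin n → Fin b,
              eoscOn f (Set.Icc (badicLeft b n w) (badicLeft b n w + ((b : ℝ) ^ n)⁻¹))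
          else 0 :=
  stmt5_general b hb f δ hδ0 hδ1
end

section
/- Let X be a nonnegative random variable satisfying the stochastic inequality X ≥ b^{-1} ∑_{k=0}^{b-1} |W_k| X_k, where (X_0,...,X_{b-1}) are i.i.d. copies of X independent of W, the |W_k| are almost surely positive with all negative-order moments E(|W_k|^{-s}) < ∞ (s > 0) finite, and P(X > 0) = 1. Then E(X^{-s}) < ∞ for all s > 0, provided E(X^{-s_0}) < ∞ for some s_0 > 0 is established via the standard bootstrap argument. -/
open MeasureTheory ProbabilityTheory Filter Finset
open scoped ENNReal

/-! Negative moments can be doubled. If `X ≥ c (V_i Y_i + V_j Y_j)` with `Y_i, Y_j` independent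
copies of `X`, independent of `V`, then `X^{-2s} ≤ c^{-2s} (Y_i Y_j)^{-s} (V_i V_j)^{-s}`, and
the right-hand side has expectation `c^{-2s} E(X^{-s})² E((V_i V_j)^{-s})`, which is finite
as soon as `E(X^{-s})` is. Starting from `s₀`, every `2ⁿ s₀` is reached, and smaller
exponents follow from `x^{-s} ≤ 1 + x^{-t}` for `s ≤ t`. -/

namespace Real

theorem rpow_neg_le_one_add_rpow_neg {x s t : ℝ} (hx : 0 < x) (hs : 0 ≤ s) (hst : s ≤ t) :
    x ^ (-s) ≤ 1 + x ^ (-t) := by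
  rcases le_or_gt 1 x with h1 | h1
  · have := rpow_le_one_of_one_le_of_nonpos h1 (neg_nonpos.mpr hs)
    linarith [rpow_nonneg hx.le (-t)]
  · have := rpow_le_rpow_of_exponent_ge hx h1.le (neg_le_neg hst)
    linarith

theorem rpow_neg_two_mul (x s : ℝ) (hx : 0 ≤ x) : x ^ (-(2 * s)) = (x ^ (-s)) ^ 2 := by
  rw [← rpow_mul_natCast hx]
  ring_nf

theorem rpow_neg_mul_rpow_neg_le {a c s : ℝ} (ha : 0 ≤ a) (hc : 0 ≤ c) :
    a ^ (-s) * c ^ (-s) ≤ a ^ (-(2 * s)) + c ^ (-(2 * s)) := by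
  rw [rpow_neg_two_mul a s ha, rpow_neg_two_mul c s hc]
  nlinarith [two_mul_le_add_sq (a ^ (-s)) (c ^ (-s)), rpow_nonneg ha (-s), rpow_nonneg hc (-s)]

theorem add_rpow_neg_two_mul_le {a b s : ℝ} (ha : 0 < a) (hb : 0 < b) (hs : 0 ≤ s) :
    (a + b) ^ (-(2 * s)) ≤ a ^ (-s) * b ^ (-s) := by
  calc (a + b) ^ (-(2 * s)) = ((a + b) ^ 2) ^ (-s) := by
        rw [rpow_neg_two_mul _ _ (by positivity), ← rpow_natCast, ← rpow_natCast,
          ← rpow_mul (by positivity), ← rpow_mul (by positivity), mul_comm]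
    _ ≤ (a * b) ^ (-s) := rpow_le_rpow_of_nonpos (by positivity) (by nlinarith) (by linarith)
    _ = a ^ (-s) * b ^ (-s) := mul_rpow ha.le hb.le

theorem rpow_neg_two_mul_le_of_le_mul_sum {ι : Type*} [Fintype ι] {c x s : ℝ}
    {v y : ι → ℝ} {i j : ι} (hij : i ≠ j) (hc : 0 < c) (hv : ∀ k, 0 < v k) (hy : ∀ k, 0 < y k)
    (hs : 0 ≤ s) (hx : c * ∑ k, v k * y k ≤ x) :
    x ^ (-(2 * s)) ≤ c ^ (-(2 * s)) * ((y i ^ (-s) * y j ^ (-s)) * (v i ^ (-s) * v j ^ (-s))) := by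
  have hvy : ∀ k, 0 < v k * y k := fun k => mul_pos (hv k) (hy k)
  have hpair : c * (v i * y i + v j * y j) ≤ x :=
    le_trans (mul_le_mul_of_nonneg_left
      (add_le_sum (fun k _ => (hvy k).le) (mem_univ i) (mem_univ j) hij) hc.le) hx
  calc x ^ (-(2 * s)) ≤ (c * (v i * y i + v j * y j)) ^ (-(2 * s)) :=
        rpow_le_rpow_of_nonpos (by nlinarith [hvy i, hvy j]) hpair (by linarith)
    _ = c ^ (-(2 * s)) * (v i * y i + v j * y j) ^ (-(2 * s)) :=
        mul_rpow hc.le (add_pos (hvy i) (hvy j)).le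
    _ ≤ c ^ (-(2 * s)) * ((v i * y i) ^ (-s) * (v j * y j) ^ (-s)) :=
        mul_le_mul_of_nonneg_left (add_rpow_neg_two_mul_le (hvy i) (hvy j) hs)
          (rpow_nonneg hc.le _)
    _ = _ := by
        rw [mul_rpow (hv i).le (hy i).le, mul_rpow (hv j).le (hy j).le]
        ring

end Real

section NegativeMoments

variable {Ω : Type*} [MeasurableSpace Ω] {μ : Measure Ω}

theorem lintegral_ofReal_rpow_neg_lt_top_of_le [IsFiniteMeasure μ] {f : Ω → ℝ}
    (hf : ∀ᵐ ω ∂μ, 0 < f ω) {s t : ℝ} (hs : 0 ≤ s) (hst : s ≤ t)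
    (ht : ∫⁻ ω, ENNReal.ofReal (f ω ^ (-t)) ∂μ < ⊤) :
    ∫⁻ ω, ENNReal.ofReal (f ω ^ (-s)) ∂μ < ⊤ := by
  have hle : ∀ᵐ ω ∂μ, ENNReal.ofReal (f ω ^ (-s)) ≤ 1 + ENNReal.ofReal (f ω ^ (-t)) := by
    filter_upwards [hf] with ω hω
    rw [← ENNReal.ofReal_one, ← ENNReal.ofReal_add zero_le_one (Real.rpow_nonneg hω.le _)]
    exact ENNReal.ofReal_le_ofReal (Real.rpow_neg_le_one_add_rpow_neg hω hs hst)
  calc ∫⁻ ω, ENNReal.ofReal (f ω ^ (-s)) ∂μ ≤ ∫⁻ ω, 1 + ENNReal.ofReal (f ω ^ (-t)) ∂μ :=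
        lintegral_mono_ae hle
    _ = μ Set.univ + ∫⁻ ω, ENNReal.ofReal (f ω ^ (-t)) ∂μ := by
        rw [lintegral_add_left measurable_const, lintegral_one]
    _ < ⊤ := ENNReal.add_lt_top.2 ⟨measure_lt_top μ _, ht⟩

theorem lintegral_ofReal_rpow_neg_mul_lt_top {f g : Ω → ℝ} (hfm : AEMeasurable f μ)
    (hf : ∀ᵐ ω ∂μ, 0 ≤ f ω) (hg : ∀ᵐ ω ∂μ, 0 ≤ g ω) {s : ℝ}
    (hf2 : ∫⁻ ω, ENNReal.ofReal (f ω ^ (-(2 * s))) ∂μ < ⊤)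
    (hg2 : ∫⁻ ω, ENNReal.ofReal (g ω ^ (-(2 * s))) ∂μ < ⊤) :
    ∫⁻ ω, ENNReal.ofReal (f ω ^ (-s)) * ENNReal.ofReal (g ω ^ (-s)) ∂μ < ⊤ := by
  have hle : ∀ᵐ ω ∂μ, ENNReal.ofReal (f ω ^ (-s)) * ENNReal.ofReal (g ω ^ (-s)) ≤
      ENNReal.ofReal (f ω ^ (-(2 * s))) + ENNReal.ofReal (g ω ^ (-(2 * s))) := by
    filter_upwards [hf, hg] with ω hfω hgω
    rw [← ENNReal.ofReal_mul (Real.rpow_nonneg hfω _)]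
    exact (ENNReal.ofReal_le_ofReal (Real.rpow_neg_mul_rpow_neg_le hfω hgω)).trans
      ENNReal.ofReal_add_le
  calc _ ≤ ∫⁻ ω, ENNReal.ofReal (f ω ^ (-(2 * s))) + ENNReal.ofReal (g ω ^ (-(2 * s))) ∂μ :=
        lintegral_mono_ae hle
    _ = _ := lintegral_add_left' (by fun_prop) _
    _ < ⊤ := ENNReal.add_lt_top.2 ⟨hf2, hg2⟩

theorem lintegral_ofReal_rpow_neg_two_mul_lt_top {ι : Type*} [Fintype ι] {X : Ω → ℝ}
    {V Y : Ω → ι → ℝ} {c s : ℝ} {i j : ι} (hij : i ≠ j) (hc : 0 < c) (hs : 0 ≤ s)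
    (hVm : ∀ k, Measurable fun ω => V ω k)
    (hYij : IndepFun (fun ω => Y ω i) (fun ω => Y ω j) μ)
    (hindep : IndepFun Y V μ)
    (hYi : IdentDistrib (fun ω => Y ω i) X μ μ) (hYj : IdentDistrib (fun ω => Y ω j) X μ μ)
    (hineq : ∀ᵐ ω ∂μ, c * ∑ k, V ω k * Y ω k ≤ X ω)
    (hVpos : ∀ᵐ ω ∂μ, ∀ k, 0 < V ω k) (hYpos : ∀ᵐ ω ∂μ, ∀ k, 0 < Y ω k)
    (hVi : ∫⁻ ω, ENNReal.ofReal (V ω i ^ (-(2 * s))) ∂μ < ⊤)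
    (hVj : ∫⁻ ω, ENNReal.ofReal (V ω j ^ (-(2 * s))) ∂μ < ⊤)
    (hX : ∫⁻ ω, ENNReal.ofReal (X ω ^ (-s)) ∂μ < ⊤) :
    ∫⁻ ω, ENNReal.ofReal (X ω ^ (-(2 * s))) ∂μ < ⊤ := by
  set φ : ℝ → ℝ≥0∞ := fun x => ENNReal.ofReal (x ^ (-s))
  have hφ : Measurable φ := by fun_prop
  set g : (ι → ℝ) → ℝ≥0∞ := fun v => φ (v i) * φ (v j)
  have hg : Measurable g := by fun_prop
  have hgY : AEMeasurable (fun ω => g (Y ω)) μ :=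
    (hφ.comp_aemeasurable hYi.aemeasurable_fst).mul (hφ.comp_aemeasurable hYj.aemeasurable_fst)
  have hgV : AEMeasurable (fun ω => g (V ω)) μ := (hg.comp (measurable_pi_iff.2 hVm)).aemeasurable
  have hbound : ∀ᵐ ω ∂μ, ENNReal.ofReal (X ω ^ (-(2 * s))) ≤
      ENNReal.ofReal (c ^ (-(2 * s))) * (g (Y ω) * g (V ω)) := by
    filter_upwards [hineq, hVpos, hYpos] with ω hω hVω hYω
    refine (ENNReal.ofReal_le_ofReal
      (Real.rpow_neg_two_mul_le_of_le_mul_sum hij hc hVω hYω hs hω)).trans_eq ?_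
    rw [ENNReal.ofReal_mul (Real.rpow_nonneg hc.le _), ENNReal.ofReal_mul
        (mul_nonneg (Real.rpow_nonneg (hYω i).le _) (Real.rpow_nonneg (hYω j).le _)),
      ENNReal.ofReal_mul (Real.rpow_nonneg (hYω i).le _),
      ENNReal.ofReal_mul (Real.rpow_nonneg (hVω i).le _)]
  have hgY_eq : ∫⁻ ω, g (Y ω) ∂μ = (∫⁻ ω, φ (X ω) ∂μ) * ∫⁻ ω, φ (X ω) ∂μ :=
    calc ∫⁻ ω, g (Y ω) ∂μ = (∫⁻ ω, φ (Y ω i) ∂μ) * ∫⁻ ω, φ (Y ω j) ∂μ :=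
          lintegral_mul_eq_lintegral_mul_lintegral_of_indepFun''
            (hφ.comp_aemeasurable hYi.aemeasurable_fst)
            (hφ.comp_aemeasurable hYj.aemeasurable_fst) (hYij.comp hφ hφ)
      _ = _ := by congr 1; exacts [(hYi.comp hφ).lintegral_eq, (hYj.comp hφ).lintegral_eq]
  have hgV_fin : ∫⁻ ω, g (V ω) ∂μ < ⊤ :=
    lintegral_ofReal_rpow_neg_mul_lt_top (hVm i).aemeasurable
      (hVpos.mono fun _ h => (h i).le) (hVpos.mono fun _ h => (h j).le) hVi hVj
  calc ∫⁻ ω, ENNReal.ofReal (X ω ^ (-(2 * s))) ∂μ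
      ≤ ∫⁻ ω, ENNReal.ofReal (c ^ (-(2 * s))) * (g (Y ω) * g (V ω)) ∂μ :=
        lintegral_mono_ae hbound
    _ = ENNReal.ofReal (c ^ (-(2 * s))) * ((∫⁻ ω, g (Y ω) ∂μ) * ∫⁻ ω, g (V ω) ∂μ) := by
        rw [lintegral_const_mul'' (f := fun ω => g (Y ω) * g (V ω)) _ (hgY.mul hgV),
          lintegral_mul_eq_lintegral_mul_lintegral_of_indepFun'' hgY hgV (hindep.comp hg hg)]
    _ < ⊤ := by
        rw [hgY_eq]
        exact ENNReal.mul_lt_top ENNReal.ofReal_lt_top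
          (ENNReal.mul_lt_top (ENNReal.mul_lt_top hX hX) hgV_fin)

end NegativeMoments

theorem stmt10_general {Ω : Type*} [MeasureSpace Ω] [IsProbabilityMeasure (ℙ : Measure Ω)]
    (b : ℕ) (hb : 2 ≤ b)
    (X : Ω → ℝ) (V : Ω → Fin b → ℝ) (X0 : Ω → Fin b → ℝ)
    (hVm : ∀ k, Measurable fun ω => V ω k)
    (hiid : iIndepFun (fun (k : Fin b) ω => X0 ω k) ℙ)
    (hindep : IndepFun (fun ω => X0 ω) (fun ω => V ω) ℙ)
    (hid : ∀ k, IdentDistrib (fun ω => X0 ω k) X ℙ ℙ)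
    (hineq : ∀ᵐ ω ∂ℙ, ((b : ℝ))⁻¹ * ∑ k, V ω k * X0 ω k ≤ X ω)
    (hVpos : ∀ᵐ ω ∂ℙ, ∀ k, 0 < V ω k)
    (hVmom : ∀ k, ∀ s : ℝ, 0 < s → (∫⁻ ω, ENNReal.ofReal (V ω k ^ (-s)) ∂ℙ) < ⊤)
    (hXpos : ∀ᵐ ω ∂ℙ, 0 < X ω)
    (hs0 : ∃ s0 : ℝ, 0 < s0 ∧ (∫⁻ ω, ENNReal.ofReal (X ω ^ (-s0)) ∂ℙ) < ⊤) :
    ∀ s : ℝ, 0 < s → (∫⁻ ω, ENNReal.ofReal (X ω ^ (-s)) ∂ℙ) < ⊤ := by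
  obtain ⟨s0, hs0, hX0⟩ := hs0
  let i : Fin b := ⟨0, by omega⟩
  let j : Fin b := ⟨1, by omega⟩
  have hij : i ≠ j := by simp [i, j, Fin.ext_iff]
  have hX0pos : ∀ᵐ ω ∂ℙ, ∀ k, 0 < X0 ω k :=
    ae_all_iff.2 fun k => (hid k).symm.ae_mem_snd measurableSet_Ioi hXpos
  have hdyadic : ∀ n : ℕ, ∫⁻ ω, ENNReal.ofReal (X ω ^ (-(2 ^ n * s0))) ∂ℙ < ⊤ := by
    intro n
    induction n with
    | zero => simpa using hX0
    | succ n ih =>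
      have hn : 0 < 2 ^ n * s0 := by positivity
      rw [pow_succ', mul_assoc]
      exact lintegral_ofReal_rpow_neg_two_mul_lt_top hij (by positivity) hn.le hVm
        (hiid.indepFun hij) hindep (hid i) (hid j) hineq hVpos hX0pos
        (hVmom i _ (by positivity)) (hVmom j _ (by positivity)) ih
  intro s hs
  obtain ⟨n, hn⟩ := pow_unbounded_of_one_lt (s / s0) one_lt_two
  exact lintegral_ofReal_rpow_neg_lt_top_of_le hXpos hs.le
    ((div_lt_iff₀ hs0).1 hn).le (hdyadic n)

/-- negative moments of the fixed point of the smoothing inequality.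
If `X ≥ b⁻¹ ∑_k V_k X_k` a.s., where `(X_0,…,X_{b-1})` are i.i.d. copies of `X`
independent of `V = (|W_0|,…,|W_{b-1}|)`, the `V_k` are a.s. positive with all
negative-order moments finite, `X > 0` a.s., and `E(X^{-s₀}) < ∞` for some `s₀ > 0`,
then `E(X^{-s}) < ∞` for all `s > 0`. -/
theorem stmt10 {Ω : Type*} [MeasureSpace Ω] [IsProbabilityMeasure (ℙ : Measure Ω)]
    (b : ℕ) (hb : 2 ≤ b)
    (X : Ω → ℝ) (V : Ω → Fin b → ℝ) (X0 : Ω → Fin b → ℝ)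
    (hXm : Measurable X)
    (hVm : ∀ k, Measurable fun ω => V ω k)
    (hX0m : ∀ k, Measurable fun ω => X0 ω k)
    (hiid : iIndepFun (fun (k : Fin b) ω => X0 ω k) ℙ)
    (hindep : IndepFun (fun ω => X0 ω) (fun ω => V ω) ℙ)
    (hid : ∀ k, IdentDistrib (fun ω => X0 ω k) X ℙ ℙ)
    (hineq : ∀ᵐ ω ∂ℙ, ((b : ℝ))⁻¹ * ∑ k, V ω k * X0 ω k ≤ X ω)
    (hVpos : ∀ᵐ ω ∂ℙ, ∀ k, 0 < V ω k)
    (hVmom : ∀ k, ∀ s : ℝ, 0 < s → (∫⁻ ω, ENNReal.ofReal (V ω k ^ (-s)) ∂ℙ) < ⊤)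
    (hXpos : ∀ᵐ ω ∂ℙ, 0 < X ω)
    (hs0 : ∃ s0 : ℝ, 0 < s0 ∧ (∫⁻ ω, ENNReal.ofReal (X ω ^ (-s0)) ∂ℙ) < ⊤) :
    ∀ s : ℝ, 0 < s → (∫⁻ ω, ENNReal.ofReal (X ω ^ (-s)) ∂ℙ) < ⊤ :=
  stmt10_general b hb X V X0 hVm hiid hindep hid hineq hVpos hVmom hXpos hs0
end

section
/- Suppose P(∑_{i=0}^{b-1} W_i = 1) = 1, all |W_i| ≤ 1 almost surely, and with probability one each index i satisfies either |W_i| ≤ γ (for a fixed γ ∈ (0,1)) or |W_i| = 1 with (∑_{k=0}^{i-1} W_k, ∑_{k=0}^{i} W_k) ∈ {(0,1),(1,0)}. Then almost surely for every 0 ≤ j ≤ b-1, |∑_{i=0}^{j} W_i| ≤ 1 + (b-1)γ/2. -/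
/-!
Write `S j` for the partial sums and call an index an anchor if `S` is `0` or `1` there. A step
of size more than `γ` jumps between the two anchor values, so from any `j` the nearest anchors
`p ≤ j ≤ q` are reached by at most `q - p` steps of size `≤ γ`. Approaching `S j` from both sides
gives `2 ‖S j‖ ≤ ‖S p‖ + ‖S q‖ + (q - p) γ`. If one anchor value is `0` this is at most
`1 + b γ`; if both are `1` then `p ≥ 1` (as `S 0 = 0`), so `q - p ≤ b - 1`.
-/

open MeasureTheory ProbabilityTheory Finset

section Anchors

variable {E : Type*} [SeminormedAddCommGroup E] {S : ℕ → E} {γ : ℝ} {P : ℕ → Prop}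

theorem exists_le_anchor_norm_sub_le (h0 : P 0) {j : ℕ}
    (hstep : ∀ i < j, ‖S (i + 1) - S i‖ ≤ γ ∨ P (i + 1)) :
    ∃ p ≤ j, P p ∧ ‖S j - S p‖ ≤ ((j : ℝ) - p) * γ := by
  induction j with
  | zero => exact ⟨0, le_rfl, h0, by simp⟩
  | succ j ih =>
    rcases hstep j j.lt_succ_self with hsmall | hanchor
    · obtain ⟨p, hpj, hp, hdist⟩ := ih fun i hi => hstep i (by omega)
      refine ⟨p, by omega, hp, ?_⟩
      calc ‖S (j + 1) - S p‖ ≤ ‖S (j + 1) - S j‖ + ‖S j - S p‖ :=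
            norm_sub_le_norm_sub_add_norm_sub _ _ _
        _ ≤ γ + ((j : ℝ) - p) * γ := add_le_add hsmall hdist
        _ = _ := by push_cast; ring
    · exact ⟨j + 1, le_rfl, hanchor, by simp⟩

theorem exists_ge_anchor_norm_sub_le {b j : ℕ} (hb : P b) (hjb : j ≤ b)
    (hstep : ∀ i < b, ‖S (i + 1) - S i‖ ≤ γ ∨ P i) :
    ∃ q, j ≤ q ∧ q ≤ b ∧ P q ∧ ‖S q - S j‖ ≤ ((q : ℝ) - j) * γ := by
  induction hjb using Nat.decreasingInduction with
  | self => exact ⟨b, le_rfl, le_rfl, hb, by simp⟩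
  | of_succ j hj ih =>
    rcases hstep j hj with hsmall | hanchor
    · obtain ⟨q, hjq, hqb, hq, hdist⟩ := ih
      refine ⟨q, by omega, hqb, hq, ?_⟩
      calc ‖S q - S j‖ ≤ ‖S q - S (j + 1)‖ + ‖S (j + 1) - S j‖ :=
            norm_sub_le_norm_sub_add_norm_sub _ _ _
        _ ≤ ((q : ℝ) - (j + 1 : ℕ)) * γ + γ := add_le_add hdist hsmall
        _ = _ := by push_cast; ring
    · exact ⟨j, le_rfl, hj.le, hanchor, by simp⟩

end Anchors

theorem norm_le_of_forall_step_le_or_jump {E : Type*} [NormedAddCommGroup E] {S : ℕ → E}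
    {u : E} {γ : ℝ} {b : ℕ} (hu : ‖u‖ = 1) (hγ0 : 0 ≤ γ) (hγ1 : γ ≤ 1) (hS0 : S 0 = 0)
    (hSb : S b = u)
    (hstep : ∀ i < b, ‖S (i + 1) - S i‖ ≤ γ ∨
      ((S i = 0 ∧ S (i + 1) = u) ∨ (S i = u ∧ S (i + 1) = 0)))
    {j : ℕ} (hj : j ≤ b) :
    ‖S j‖ ≤ 1 + ((b : ℝ) - 1) * γ / 2 := by
  set P : ℕ → Prop := fun m => S m = 0 ∨ S m = u
  obtain ⟨p, hpj, hp, hdist_p⟩ := exists_le_anchor_norm_sub_le (S := S) (P := P) (j := j)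
    (Or.inl hS0) fun i hi => (hstep i (by omega)).imp_right fun h => h.symm.imp And.right And.right
  obtain ⟨q, hjq, hqb, hq, hdist_q⟩ := exists_ge_anchor_norm_sub_le (S := S) (P := P)
    (Or.inr hSb) hj fun i hi => (hstep i hi).imp_right fun h => h.imp And.left And.left
  have hnorm_p : ‖S j‖ ≤ ‖S p‖ + ((j : ℝ) - p) * γ :=
    (norm_le_norm_add_norm_sub' _ _).trans (add_le_add_right hdist_p _)
  have hnorm_q : ‖S j‖ ≤ ‖S q‖ + ((q : ℝ) - j) * γ :=
    (norm_le_norm_add_norm_sub _ _).trans (add_le_add_right hdist_q _)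
  have hqb' : (q : ℝ) ≤ b := by exact_mod_cast hqb
  by_cases hpq : S p = u ∧ S q = u
  · have hp1 : (1 : ℝ) ≤ p := by
      have hp0 : p ≠ 0 := by
        rintro rfl
        simp [← hpq.1, hS0] at hu
      exact_mod_cast Nat.one_le_iff_ne_zero.mpr hp0
    rw [hpq.1, hu] at hnorm_p
    rw [hpq.2, hu] at hnorm_q
    have hqp : (q : ℝ) - p ≤ b - 1 := by linarith
    have := mul_le_mul_of_nonneg_right hqp hγ0
    linarith
  · have hpq1 : ‖S p‖ + ‖S q‖ ≤ 1 := by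
      rcases hp with hp | hp <;> rcases hq with hq | hq <;> simp_all
    have hqp : (q : ℝ) - p ≤ b := by linarith [p.cast_nonneg (α := ℝ)]
    have := mul_le_mul_of_nonneg_right hqp hγ0
    linarith

theorem stmt13_general {Ω : Type*} [MeasureSpace Ω] [IsProbabilityMeasure (ℙ : Measure Ω)]
    (b : ℕ) (γ : ℝ) (hγ : γ ∈ Set.Ioo (0:ℝ) 1)
    (W : Ω → ℕ → ℂ)
    (h : ∀ᵐ ω ∂ℙ,
      (∑ i ∈ Finset.range b, W ω i = 1) ∧
      (∀ i < b, ‖W ω i‖ ≤ 1) ∧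
      (∀ i < b, ‖W ω i‖ ≤ γ ∨
        (‖W ω i‖ = 1 ∧
          ((∑ k ∈ Finset.range i, W ω k = 0 ∧ ∑ k ∈ Finset.range (i + 1), W ω k = 1) ∨
           (∑ k ∈ Finset.range i, W ω k = 1 ∧ ∑ k ∈ Finset.range (i + 1), W ω k = 0))))) :
    ∀ᵐ ω ∂ℙ, ∀ j < b, ‖∑ i ∈ Finset.range (j + 1), W ω i‖ ≤ 1 + ((b : ℝ) - 1) * γ / 2 := by
  filter_upwards [h] with ω ⟨hsum, _, hstep⟩ j hj
  refine norm_le_of_forall_step_le_or_jump (S := fun m => ∑ i ∈ range m, W ω i) norm_one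
    hγ.1.le hγ.2.le (sum_range_zero _) hsum (fun i hi => ?_) hj
  simpa only [sum_range_succ_sub_sum] using (hstep i hi).imp_right And.right

/-- under condition (2.5) of the critical conservative case
(`∑ W_i = 1` a.s., `|W_i| ≤ 1` a.s., and each `i` satisfies either `|W_i| ≤ γ` or
`|W_i| = 1` with `(∑_{k<i} W_k, ∑_{k≤i} W_k) ∈ {(0,1),(1,0)}`), almost surely all
partial sums satisfy `|∑_{i=0}^j W_i| ≤ 1 + (b-1)γ/2`. -/
theorem stmt13 {Ω : Type*} [MeasureSpace Ω] [IsProbabilityMeasure (ℙ : Measure Ω)]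
    (b : ℕ) (hb : 2 ≤ b) (γ : ℝ) (hγ : γ ∈ Set.Ioo (0:ℝ) 1)
    (W : Ω → ℕ → ℂ)
    (h : ∀ᵐ ω ∂ℙ,
      (∑ i ∈ Finset.range b, W ω i = 1) ∧
      (∀ i < b, ‖W ω i‖ ≤ 1) ∧
      (∀ i < b, ‖W ω i‖ ≤ γ ∨
        (‖W ω i‖ = 1 ∧
          ((∑ k ∈ Finset.range i, W ω k = 0 ∧ ∑ k ∈ Finset.range (i + 1), W ω k = 1) ∨
           (∑ k ∈ Finset.range i, W ω k = 1 ∧ ∑ k ∈ Finset.range (i + 1), W ω k = 0))))) :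
    ∀ᵐ ω ∂ℙ, ∀ j < b, ‖∑ i ∈ Finset.range (j + 1), W ω i‖ ≤ 1 + ((b : ℝ) - 1) * γ / 2 :=
  stmt13_general b γ hγ W h
end
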